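/- arXiv:2208.12636 — 9 statements merged into one kernel-verified Lean document; each statement's English description precedes it below -/
import Mathlib

section
/- For any fractional packing {r_T} of bad triangles in a complete signed graph G (where a bad triangle has two positive edges and one negative edge, and the packing satisfies sum of r_T over triangles containing any edge e is at most 1), the sum of all r_T is at most the number of edges in disagreement with any clustering of G, in particular the optimal one. -/
/-!
A clustering errs on some edge of every bad triangle `{u, v, w}` (`uv`, `uw` positive, `vw`
negative): if it keeps `uv` and `uw` inside clusters, then `v` and `w` share a cluster and `vw`
disagrees. Charging each bad triangle to a disagreeing edge it contains, the packing constraint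
says that every disagreeing edge is charged at most one in total.
-/

attribute [local instance] Classical.propDecidable

/-- A triangle `{u,v,w}` is *bad* if two of its edges are positive and one is negative. -/
def IsBadTriangle {V : Type*} [DecidableEq V] (pos : V → V → Bool) (t : Finset V) : Prop :=
  ∃ u v w : V, u ≠ v ∧ u ≠ w ∧ v ≠ w ∧ t = {u, v, w} ∧
    pos u v = true ∧ pos u w = true ∧ pos v w = false

/-- The edge `(u,v)` is in disagreement with the clustering `c` : a positive edge disagrees
if its endpoints lie in different clusters, a negative edge disagrees if they lie in the same. -/
def Disagree {V : Type*} (pos : V → V → Bool) (c : V → ℕ) (u v : V) : Prop :=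
  (pos u v = true ∧ c u ≠ c v) ∨ (pos u v = false ∧ c u = c v)

/-- Number of edges (unordered pairs) in disagreement with the clustering `c`. -/
noncomputable def disagreements {V : Type*} [Fintype V] [LinearOrder V]
    (pos : V → V → Bool) (c : V → ℕ) : ℕ :=
  (Finset.univ.filter (fun p : V × V => p.1 < p.2 ∧ Disagree pos c p.1 p.2)).card

open Finset

/-- Weak LP duality: a fractional packing weighs at most the size of any cover `D`. -/
theorem Finset.sum_le_card_of_forall_exists_rel {α β 𝕜 : Type*} [Semiring 𝕜] [PartialOrder 𝕜]
    [IsOrderedRing 𝕜] {S : Finset α} {D : Finset β} {R : α → β → Prop} [DecidableRel R]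
    {r : α → 𝕜} (hr : ∀ t ∈ S, 0 ≤ r t) (hcover : ∀ t ∈ S, ∃ e ∈ D, R t e)
    (hpack : ∀ e ∈ D, ∑ t ∈ S with R t e, r t ≤ 1) :
    ∑ t ∈ S, r t ≤ #D := by
  calc ∑ t ∈ S, r t
      ≤ ∑ t ∈ S, ∑ e ∈ D with R t e, r t := by
        refine sum_le_sum fun t ht => ?_
        obtain ⟨e, he, hte⟩ := hcover t ht
        have hcard : 1 ≤ #{e ∈ D | R t e} := card_pos.mpr ⟨e, mem_filter.mpr ⟨he, hte⟩⟩
        rw [sum_const]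
        exact le_smul_of_one_le_left (hr t ht) hcard
    _ = ∑ e ∈ D, ∑ t ∈ S with R t e, r t := by
        simp only [sum_filter]
        exact sum_comm
    _ ≤ ∑ _e ∈ D, 1 := sum_le_sum hpack
    _ = #D := by simp

theorem Disagree.symm {V : Type*} {pos : V → V → Bool} (hsym : ∀ u v, pos u v = pos v u)
    {c : V → ℕ} {u v : V} (h : Disagree pos c u v) : Disagree pos c v u := by
  rcases h with ⟨hp, hc⟩ | ⟨hp, hc⟩
  · exact Or.inl ⟨(hsym v u).trans hp, hc.symm⟩
  · exact Or.inr ⟨(hsym v u).trans hp, hc.symm⟩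

theorem IsBadTriangle.exists_disagree {V : Type*} [DecidableEq V] {pos : V → V → Bool}
    {t : Finset V} (ht : IsBadTriangle pos t) (c : V → ℕ) :
    ∃ u ∈ t, ∃ v ∈ t, u ≠ v ∧ Disagree pos c u v := by
  obtain ⟨u, v, w, huv, huw, hvw, rfl, huv_pos, huw_pos, hvw_neg⟩ := ht
  by_cases hcuv : c u = c v
  · by_cases hcuw : c u = c w
    · exact ⟨v, by simp, w, by simp, hvw, Or.inr ⟨hvw_neg, hcuv.symm.trans hcuw⟩⟩
    · exact ⟨u, by simp, w, by simp, huw, Or.inl ⟨huw_pos, hcuw⟩⟩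
  · exact ⟨u, by simp, v, by simp, huv, Or.inl ⟨huv_pos, hcuv⟩⟩

theorem IsBadTriangle.exists_lt_disagree {V : Type*} [LinearOrder V] {pos : V → V → Bool}
    (hsym : ∀ u v, pos u v = pos v u) {t : Finset V} (ht : IsBadTriangle pos t) (c : V → ℕ) :
    ∃ u ∈ t, ∃ v ∈ t, u < v ∧ Disagree pos c u v := by
  obtain ⟨u, hu, v, hv, huv, hd⟩ := ht.exists_disagree c
  rcases huv.lt_or_gt with hlt | hgt
  · exact ⟨u, hu, v, hv, hlt, hd⟩
  · exact ⟨v, hv, u, hu, hgt, hd.symm hsym⟩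

theorem fractional_packing_le_disagreements_general {V : Type*} [Fintype V] [LinearOrder V]
    (pos : V → V → Bool) (hsym : ∀ u v, pos u v = pos v u)
    (r : Finset V → ℝ)
    (hr0 : ∀ t, 0 ≤ r t)
    (hpack : ∀ u v : V, u ≠ v →
      ∑ t ∈ Finset.univ.filter
        (fun t : Finset V => IsBadTriangle pos t ∧ u ∈ t ∧ v ∈ t), r t ≤ 1)
    (c : V → ℕ) :
    ∑ t ∈ Finset.univ.filter (fun t : Finset V => IsBadTriangle pos t), r t
      ≤ (disagreements pos c : ℝ) := by
  rw [disagreements]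
  refine sum_le_card_of_forall_exists_rel (R := fun t p => p.1 ∈ t ∧ p.2 ∈ t)
    (fun t _ => hr0 t) (fun t ht => ?_) (fun p hp => ?_)
  · obtain ⟨u, hu, v, hv, huv, hd⟩ := (mem_filter.mp ht).2.exists_lt_disagree hsym c
    exact ⟨(u, v), mem_filter.mpr ⟨mem_univ _, huv, hd⟩, hu, hv⟩
  · rw [filter_filter]
    exact hpack p.1 p.2 (mem_filter.mp hp).2.1.ne

/-- For any fractional packing `{r_T}` of bad triangles, `∑ r_T` is at most the number of
disagreements of any clustering (in particular of the optimal one). -/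
theorem fractional_packing_le_disagreements {V : Type*} [Fintype V] [LinearOrder V]
    (pos : V → V → Bool) (hsym : ∀ u v, pos u v = pos v u)
    (r : Finset V → ℝ)
    (hr0 : ∀ t, 0 ≤ r t) (hr1 : ∀ t, r t ≤ 1)
    (hsupp : ∀ t, ¬ IsBadTriangle pos t → r t = 0)
    (hpack : ∀ u v : V, u ≠ v →
      ∑ t ∈ Finset.univ.filter
        (fun t : Finset V => IsBadTriangle pos t ∧ u ∈ t ∧ v ∈ t), r t ≤ 1)
    (c : V → ℕ) :
    ∑ t ∈ Finset.univ.filter (fun t : Finset V => IsBadTriangle pos t), r t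
      ≤ (disagreements pos c : ℝ) :=
  fractional_packing_le_disagreements_general pos hsym r hr0 hpack c
end

section
/- The number of edge-disjoint bad triangles in a complete signed graph is a lower bound on the minimum number of disagreements over all clusterings. -/
attribute [local instance] Classical.propDecidable

lemma bad_triangle_has_disagreement {V : Type*} [Fintype V] [LinearOrder V]
    (pos : V → V → Bool) (hsym : ∀ u v, pos u v = pos v u) (c : V → ℕ)
    {t : Finset V} (ht : IsBadTriangle pos t) :
    ∃ a b : V, a < b ∧ a ∈ t ∧ b ∈ t ∧ Disagree pos c a b := by
  obtain ⟨u, v, w, huv, huw, hvw, hteq, p1, p2, p3⟩ := ht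
  have hsymD : ∀ a b : V, Disagree pos c a b → Disagree pos c b a := by
    intro a b h
    rcases h with ⟨h1, h2⟩ | ⟨h1, h2⟩
    · exact Or.inl ⟨(hsym b a).trans h1, fun h => h2 h.symm⟩
    · exact Or.inr ⟨(hsym b a).trans h1, h2.symm⟩
  have key : ∃ a b : V, a ≠ b ∧ a ∈ t ∧ b ∈ t ∧ Disagree pos c a b := by
    subst hteq
    by_cases h1 : c u = c v
    · by_cases h2 : c u = c w
      · exact ⟨v, w, hvw, by simp, by simp, Or.inr ⟨p3, h1.symm.trans h2⟩⟩
      · exact ⟨u, w, huw, by simp, by simp, Or.inl ⟨p2, h2⟩⟩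
    · exact ⟨u, v, huv, by simp, by simp, Or.inl ⟨p1, h1⟩⟩
  obtain ⟨a, b, hab, ha, hb, hd⟩ := key
  rcases lt_or_gt_of_ne hab with h | h
  · exact ⟨a, b, h, ha, hb, hd⟩
  · exact ⟨b, a, h, hb, ha, hsymD a b hd⟩

/-- The number of edge-disjoint bad triangles is a lower bound on the number of
disagreements of every clustering, hence on the minimum number of disagreements. -/
theorem edge_disjoint_bad_triangles_le_disagreements {V : Type*} [Fintype V] [LinearOrder V]
    (pos : V → V → Bool) (hsym : ∀ u v, pos u v = pos v u)
    (T : Finset (Finset V))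
    (hbad : ∀ t ∈ T, IsBadTriangle pos t)
    (hdisj : ∀ t ∈ T, ∀ t' ∈ T, t ≠ t' → (t ∩ t').card ≤ 1)
    (c : V → ℕ) :
    T.card ≤ disagreements pos c := by
  have hex : ∀ t ∈ T, ∃ p : V × V, p.1 < p.2 ∧ p.1 ∈ t ∧ p.2 ∈ t ∧
      Disagree pos c p.1 p.2 := by
    intro t ht
    obtain ⟨a, b, h1, h2, h3, h4⟩ := bad_triangle_has_disagreement pos hsym c (hbad t ht)
    exact ⟨(a, b), h1, h2, h3, h4⟩
  rcases T.eq_empty_or_nonempty with rfl | ⟨t0, ht0⟩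
  · simp
  haveI : Nonempty V := by
    obtain ⟨u, _⟩ := hbad t0 ht0
    exact ⟨u⟩
  choose! f hf using hex
  apply Finset.card_le_card_of_injOn f
  · intro t ht
    obtain ⟨h1, _, _, h4⟩ := hf t ht
    simp only [Finset.coe_filter, Set.mem_setOf_eq, Finset.mem_coe, Finset.mem_filter, Finset.mem_univ, true_and]
    exact ⟨h1, h4⟩
  · intro t ht t' ht' heq
    by_contra hne
    obtain ⟨hlt, ha, hb, _⟩ := hf t ht
    obtain ⟨_, ha', hb', _⟩ := hf t' ht'
    have h2 : ({(f t).1, (f t).2} : Finset V) ⊆ t ∩ t' := by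
      intro x hx
      simp only [Finset.mem_insert, Finset.mem_singleton] at hx
      rcases hx with rfl | rfl
      · exact Finset.mem_inter.mpr ⟨ha, heq ▸ ha'⟩
      · exact Finset.mem_inter.mpr ⟨hb, heq ▸ hb'⟩
    have hcard : 2 ≤ (t ∩ t').card := by
      calc 2 = ({(f t).1, (f t).2} : Finset V).card := by
              rw [Finset.card_insert_of_notMem (by simp [hlt.ne]), Finset.card_singleton]
           _ ≤ (t ∩ t').card := Finset.card_le_card h2
    have := hdisj t ht t' ht' hne
    omega
end

section
/- If C and C' are disjoint δ-clean clusters (with δ < 1/9) and X is any set of vertices, then it is impossible for both a vertex v1 ∈ C and a vertex v2 ∈ C' to be 3δ-good with respect to X. -/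
/-!
Let `a = |C ∩ X|`, `b = |C' ∩ X|` and `s = |C| + |C'|`. A vertex that is good for two sets forces
them to overlap in both directions: `|N⁺(v) ∩ A| ≤ |A ∩ B| + |N⁺(v) \ B|` gives
`|A ∩ B| ≥ (1 - δ)|A| - ε|B|`. Applied at `v₁` and `v₂` in both directions, and combined with
`a + b ≤ |X|` (disjointness), this yields `(1 - δ) s ≤ (1 + 6δ)|X|` and `(1 - 6δ)|X| ≤ δ s`,
hence `(1 - 8δ) s ≤ 0`, impossible for `δ < 1/8` since `s > 0`.
-/

attribute [local instance] Classical.propDecidable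

/-- `N⁺(v)`: the vertex `v` together with all vertices joined to it by a positive edge. -/
def Nplus {V : Type*} [Fintype V] [DecidableEq V] (pos : V → V → Bool) (v : V) : Finset V :=
  insert v (Finset.univ.filter (fun u => pos u v = true))

/-- `v` is `δ`-good with respect to `C`: `|N⁺(v) ∩ C| ≥ (1-δ)|C|` and `|N⁺(v) ∩ (V \ C)| ≤ δ|C|`. -/
def IsGood {V : Type*} [Fintype V] [DecidableEq V]
    (pos : V → V → Bool) (δ : ℝ) (v : V) (C : Finset V) : Prop :=
  (1 - δ) * (C.card : ℝ) ≤ ((Nplus pos v ∩ C).card : ℝ) ∧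
  ((Nplus pos v ∩ Cᶜ).card : ℝ) ≤ δ * (C.card : ℝ)

/-- A set `C` is `δ`-clean if every vertex of `C` is `δ`-good with respect to `C`. -/
def IsClean {V : Type*} [Fintype V] [DecidableEq V]
    (pos : V → V → Bool) (δ : ℝ) (C : Finset V) : Prop :=
  ∀ v ∈ C, IsGood pos δ v C

namespace IsGood

variable {V : Type*} [Fintype V] [DecidableEq V] {pos : V → V → Bool} {δ ε : ℝ} {v : V}
  {A B : Finset V}

lemma nonneg (h : IsGood pos δ v A) (hA : A.Nonempty) : 0 ≤ δ := by
  have hcard : (0 : ℝ) < A.card := by exact_mod_cast hA.card_pos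
  exact nonneg_of_mul_nonneg_left ((Nat.cast_nonneg _).trans h.2) hcard

lemma sub_le_card_inter (hA : IsGood pos δ v A) (hB : IsGood pos ε v B) :
    (1 - δ) * (A.card : ℝ) - ε * (B.card : ℝ) ≤ ((A ∩ B).card : ℝ) := by
  have hsub : Nplus pos v ∩ A ⊆ (A ∩ B) ∪ (Nplus pos v ∩ Bᶜ) := by
    intro u hu
    by_cases huB : u ∈ B <;> simp_all
  have hcard : ((Nplus pos v ∩ A).card : ℝ) ≤ (A ∩ B).card + (Nplus pos v ∩ Bᶜ).card := by
    exact_mod_cast (Finset.card_le_card hsub).trans (Finset.card_union_le _ _)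
  linarith [hA.1, hB.2]

end IsGood

lemma Finset.card_inter_add_card_inter_le_of_disjoint {α : Type*} [DecidableEq α]
    {s t : Finset α} (h : Disjoint s t) (u : Finset α) :
    (s ∩ u).card + (t ∩ u).card ≤ u.card := by
  rw [← Finset.card_union_of_disjoint (h.mono Finset.inter_subset_left Finset.inter_subset_left),
    ← Finset.union_inter_distrib_right]
  exact Finset.card_le_card Finset.inter_subset_right

theorem not_both_good_general {V : Type*} [Fintype V] [DecidableEq V]
    (pos : V → V → Bool)
    (δ : ℝ) (hδ : δ < 1/9)
    (C C' X : Finset V) (hdisj : Disjoint C C')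
    (hC : IsClean pos δ C) (hC' : IsClean pos δ C')
    (v₁ v₂ : V) (hv₁ : v₁ ∈ C) (hv₂ : v₂ ∈ C') :
    ¬ (IsGood pos (3 * δ) v₁ X ∧ IsGood pos (3 * δ) v₂ X) := by
  rintro ⟨hX₁, hX₂⟩
  have hδ₀ : 0 ≤ δ := (hC v₁ hv₁).nonneg ⟨v₁, hv₁⟩
  have hs : (1 : ℝ) ≤ C.card + C'.card := by
    have : 1 ≤ C.card := Finset.card_pos.mpr ⟨v₁, hv₁⟩
    exact_mod_cast this.trans (Nat.le_add_right _ _)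
  have hCX := (hC v₁ hv₁).sub_le_card_inter hX₁
  have hC'X := (hC' v₂ hv₂).sub_le_card_inter hX₂
  have hXC := Finset.inter_comm X C ▸ hX₁.sub_le_card_inter (hC v₁ hv₁)
  have hXC' := Finset.inter_comm X C' ▸ hX₂.sub_le_card_inter (hC' v₂ hv₂)
  have hsum : ((C ∩ X).card : ℝ) + (C' ∩ X).card ≤ X.card := by
    exact_mod_cast Finset.card_inter_add_card_inter_le_of_disjoint hdisj X
  have hupper : (1 - δ) * (C.card + C'.card) ≤ (1 + 6 * δ) * X.card := by linarith
  have hlower : (1 - 6 * δ) * X.card ≤ δ * (C.card + C'.card) := by linarith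
  nlinarith [mul_le_mul_of_nonneg_left hupper (by linarith : (0 : ℝ) ≤ 1 - 6 * δ),
    mul_le_mul_of_nonneg_left hlower (by linarith : (0 : ℝ) ≤ 1 + 6 * δ)]

/-- If `C` and `C'` are disjoint `δ`-clean clusters with `δ < 1/9` and `X` is any set of
vertices, then a vertex `v₁ ∈ C` and a vertex `v₂ ∈ C'` cannot both be `3δ`-good w.r.t. `X`. -/
theorem not_both_good {V : Type*} [Fintype V] [DecidableEq V]
    (pos : V → V → Bool) (hsym : ∀ u v, pos u v = pos v u)
    (δ : ℝ) (hδ : δ < 1/9)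
    (C C' X : Finset V) (hdisj : Disjoint C C')
    (hC : IsClean pos δ C) (hC' : IsClean pos δ C')
    (v₁ v₂ : V) (hv₁ : v₁ ∈ C) (hv₂ : v₂ ∈ C') :
    ¬ (IsGood pos (3 * δ) v₁ X ∧ IsGood pos (3 * δ) v₂ X) :=
  not_both_good_general pos δ hδ C C' X hdisj hC hC' v₁ v₂ hv₁ hv₂
end

section
/- For any clustering of a complete signed graph in which every cluster is δ-clean with δ ≤ 1/4, the total number of disagreeing edges is at most 4 times the minimum number of disagreements of any clustering. -/
attribute [local instance] Classical.propDecidable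

/-!
Count disagreements as ordered pairs and compare the pairs on which only `c` errs with those on
which only `c'` errs. If only `c` errs on `(u, v)`, there is a set `W` of size at least half of
each of the clusters of `u` and `v` such that for every `w ∈ W` only `c'` errs on `(u, w)` or on
`(v, w)`: for a negative edge, the common positive neighbours of `u` and `v` in their cluster;
for a positive edge, the positive neighbours of `v` in its cluster (the larger one) that are not
positive neighbours of `u`. Hence `1 ≤ 2 (out u / |C u| + out v / |C v|)`, where `out x` counts
the pairs `(x, w)` of the second kind, and since `c` errs on at most `2δ|C u|` pairs at `u`,
summing gives a ratio of `8δ ≤ 2`.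
-/

open Finset

section Counting

variable {α : Type*} [DecidableEq α]

lemma one_le_two_mul_add_div_of_subset_union {W X Y : Finset α} {a b : ℝ}
    (ha : 0 < a) (hb : 0 < b) (hW : W ⊆ X ∪ Y) (haW : a ≤ 2 * #W) (hbW : b ≤ 2 * #W) :
    1 ≤ 2 * (#X / a + #Y / b) := by
  have hXY : (#W : ℝ) ≤ #X + #Y := by
    exact_mod_cast (card_le_card hW).trans (card_union_le X Y)
  have hW0 : (0 : ℝ) < #W := by linarith
  have hXa : (#X : ℝ) / (2 * #W) ≤ #X / a := div_le_div_of_nonneg_left (by positivity) ha haW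
  have hYb : (#Y : ℝ) / (2 * #W) ≤ #Y / b := div_le_div_of_nonneg_left (by positivity) hb hbW
  have : (1 : ℝ) ≤ 2 * (#X / (2 * #W) + #Y / (2 * #W)) := by
    rw [← add_div, mul_div_assoc', le_div_iff₀ (by positivity)]
    linarith
  linarith

variable [Fintype α]

def neighbors (s : Finset (α × α)) (u : α) : Finset α := {v | (u, v) ∈ s}

lemma sum_fst_eq_sum_card_neighbors_mul (s : Finset (α × α)) (f : α → ℝ) :
    ∑ e ∈ s, f e.1 = ∑ u, #(neighbors s u) * f u := by
  rw [← Fintype.sum_ite_mem s, Fintype.sum_prod_type]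
  refine sum_congr rfl fun u _ => ?_
  rw [neighbors, card_filter, Nat.cast_sum, sum_mul]
  simp

lemma card_eq_sum_card_neighbors (s : Finset (α × α)) :
    (#s : ℝ) = ∑ u, (#(neighbors s u) : ℝ) := by
  simpa using sum_fst_eq_sum_card_neighbors_mul s 1

end Counting

lemma sum_snd_eq_sum_fst_of_swap_mem {α M : Type*} [AddCommMonoid M] {s : Finset (α × α)}
    (hs : ∀ e, e.swap ∈ s ↔ e ∈ s) (f : α → M) :
    ∑ e ∈ s, f e.2 = ∑ e ∈ s, f e.1 :=
  sum_nbij' Prod.swap Prod.swap (fun e he => (hs e).2 he) (fun e he => (hs e).2 he)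
    (fun _ _ => rfl) (fun _ _ => rfl) (fun _ _ => rfl)

section Clustering

variable {V : Type*} {pos : V → V → Bool} {δ : ℝ} {c c' : V → ℕ}

lemma disagree_comm (hsym : ∀ u v, pos u v = pos v u) {u v : V} :
    Disagree pos c u v ↔ Disagree pos c v u := by
  simp only [Disagree, hsym u v, eq_comm (a := c u), ne_comm (a := c u)]

variable [Fintype V]

def cluster (c : V → ℕ) (v : V) : Finset V := {u | c u = c v}

@[simp]
lemma mem_cluster {u v : V} : u ∈ cluster c v ↔ c u = c v := by
  simp [cluster]

lemma card_cluster_pos (c : V → ℕ) (v : V) : 0 < #(cluster c v) :=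
  card_pos.2 ⟨v, mem_cluster.2 rfl⟩

lemma cluster_eq_of_eq {u v : V} (h : c u = c v) : cluster c u = cluster c v := by
  ext
  simp [h]

variable [DecidableEq V]

def IsCleanClustering (pos : V → V → Bool) (δ : ℝ) (c : V → ℕ) : Prop :=
  ∀ i : ℕ, IsClean pos δ (Finset.univ.filter (fun v => c v = i))

lemma IsCleanClustering.isGood (hclean : IsCleanClustering pos δ c) (v : V) :
    IsGood pos δ v (cluster c v) :=
  hclean (c v) v (by simp)

@[simp]
lemma mem_nplus {u v : V} : u ∈ Nplus pos v ↔ u = v ∨ pos u v = true := by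
  simp [Nplus]

noncomputable def disagreePairs (pos : V → V → Bool) (c : V → ℕ) : Finset (V × V) :=
  {e | e.1 ≠ e.2 ∧ Disagree pos c e.1 e.2}

@[simp]
lemma mem_disagreePairs {e : V × V} :
    e ∈ disagreePairs pos c ↔ e.1 ≠ e.2 ∧ Disagree pos c e.1 e.2 := by
  simp [disagreePairs]

lemma swap_mem_disagreePairs (hsym : ∀ u v, pos u v = pos v u) (e : V × V) :
    e.swap ∈ disagreePairs pos c ↔ e ∈ disagreePairs pos c := by
  simp [disagree_comm hsym (u := e.2), ne_comm (a := e.2)]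

lemma card_neighbors_disagreePairs_le (hsym : ∀ u v, pos u v = pos v u)
    (hclean : IsCleanClustering pos δ c) (u : V) :
    (#(neighbors (disagreePairs pos c) u) : ℝ) ≤ 2 * δ * #(cluster c u) := by
  obtain ⟨hin, hout⟩ := hclean.isGood u
  set C := cluster c u
  set N := Nplus pos u
  have hsub : neighbors (disagreePairs pos c) u ⊆ (C \ N) ∪ (N ∩ Cᶜ) := by
    intro v
    simp only [C, N, neighbors, mem_filter, mem_univ, true_and, mem_disagreePairs, Disagree,
      mem_union, mem_sdiff, mem_inter, mem_compl, mem_cluster, mem_nplus, hsym v u]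
    grind
  have hcard : (#(neighbors (disagreePairs pos c) u) : ℝ) ≤ #(C \ N) + #(N ∩ Cᶜ) := by
    exact_mod_cast (card_le_card hsub).trans (card_union_le _ _)
  have : (#(C \ N) : ℝ) + #(N ∩ C) = #C := by
    rw [inter_comm]
    exact_mod_cast card_sdiff_add_card_inter _ _
  linarith

lemma card_cluster_le_two_mul_card_inter (hδ : δ ≤ 1/4) (hclean : IsCleanClustering pos δ c)
    {u v : V} (h : c u = c v) :
    (#(cluster c u) : ℝ) ≤
      2 * #((Nplus pos u ∩ cluster c u) ∩ (Nplus pos v ∩ cluster c v)) := by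
  have hu := (hclean.isGood u).1
  have hv := (hclean.isGood v).1
  rw [← cluster_eq_of_eq h] at hv ⊢
  set C := cluster c u
  set X := Nplus pos u ∩ C
  set Y := Nplus pos v ∩ C
  have hunion : (#(X ∪ Y) : ℝ) ≤ #C := by
    exact_mod_cast card_le_card (union_subset inter_subset_right inter_subset_right)
  have hincl : (#(X ∩ Y) : ℝ) + #(X ∪ Y) = #X + #Y := by
    exact_mod_cast card_inter_add_card_union X Y
  have : δ * #C ≤ 1 / 4 * #C := by gcongr
  linarith

lemma inter_subset_neighbors (hsym : ∀ u v, pos u v = pos v u) {u v : V}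
    (hp : pos u v = false) (hc' : c' u ≠ c' v) :
    (Nplus pos u ∩ cluster c u) ∩ (Nplus pos v ∩ cluster c v) ⊆
      neighbors (disagreePairs pos c' \ disagreePairs pos c) u ∪
        neighbors (disagreePairs pos c' \ disagreePairs pos c) v := by
  intro w
  simp only [neighbors, mem_filter, mem_univ, true_and, mem_sdiff, mem_disagreePairs, Disagree,
    mem_union, mem_inter, mem_cluster, mem_nplus]
  -- `c'` separates `w` from `u` or from `v`, violating a positive edge that `c` respects.
  grind

lemma card_cluster_le_two_mul_card_sdiff (hδ : δ ≤ 1/4) (hclean : IsCleanClustering pos δ c)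
    {u v : V} (hc : c u ≠ c v) (hsz : #(cluster c u) ≤ #(cluster c v)) :
    (#(cluster c v) : ℝ) ≤ 2 * #((Nplus pos v ∩ cluster c v) \ Nplus pos u) := by
  have hv := (hclean.isGood v).1
  have hu := (hclean.isGood u).2
  set X := Nplus pos v ∩ cluster c v
  have hδ0 : 0 ≤ δ := nonneg_of_mul_nonneg_left ((Nat.cast_nonneg _).trans hu)
    (by exact_mod_cast card_cluster_pos c u)
  have hsub : X ∩ Nplus pos u ⊆ Nplus pos u ∩ (cluster c u)ᶜ := by
    intro w
    simp only [X, mem_inter, mem_compl, mem_cluster]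
    grind
  have hsplit : (#(X \ Nplus pos u) : ℝ) + #(X ∩ Nplus pos u) = #X := by
    exact_mod_cast card_sdiff_add_card_inter _ _
  have : (#(X ∩ Nplus pos u) : ℝ) ≤ #(Nplus pos u ∩ (cluster c u)ᶜ) := by
    exact_mod_cast card_le_card hsub
  have : δ * #(cluster c u) ≤ δ * #(cluster c v) := by gcongr
  have : δ * #(cluster c v) ≤ 1 / 4 * #(cluster c v) := by gcongr
  linarith

lemma sdiff_subset_neighbors (hsym : ∀ u v, pos u v = pos v u) {u v : V}
    (hp : pos u v = true) (hc : c u ≠ c v) (hc' : c' u = c' v) :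
    (Nplus pos v ∩ cluster c v) \ Nplus pos u ⊆
      neighbors (disagreePairs pos c' \ disagreePairs pos c) u ∪
        neighbors (disagreePairs pos c' \ disagreePairs pos c) v := by
  intro w
  simp only [neighbors, mem_filter, mem_univ, true_and, mem_sdiff, mem_disagreePairs, Disagree,
    mem_union, mem_inter, mem_cluster, mem_nplus]
  -- If `c'` puts `w` with `u` it violates the negative edge `uw`, otherwise the positive edge `vw`.
  grind

lemma one_le_two_mul_add_div_of_mem_sdiff (hsym : ∀ u v, pos u v = pos v u) (hδ : δ ≤ 1/4)
    (hclean : IsCleanClustering pos δ c) {e : V × V}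
    (he : e ∈ disagreePairs pos c \ disagreePairs pos c') :
    (1 : ℝ) ≤ 2 * (#(neighbors (disagreePairs pos c' \ disagreePairs pos c) e.1) /
      #(cluster c e.1) + #(neighbors (disagreePairs pos c' \ disagreePairs pos c) e.2) /
        #(cluster c e.2)) := by
  obtain ⟨u, v⟩ := e
  simp only [mem_sdiff, mem_disagreePairs, Disagree, not_and, not_or] at he
  obtain ⟨⟨huv, hd⟩, hnd⟩ := he
  have hu : (0 : ℝ) < #(cluster c u) := by exact_mod_cast card_cluster_pos c u
  have hv : (0 : ℝ) < #(cluster c v) := by exact_mod_cast card_cluster_pos c v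
  rcases hd with ⟨hp, hc⟩ | ⟨hp, hc⟩
  · have hc' : c' u = c' v := by grind
    rcases le_total #(cluster c u) #(cluster c v) with hsz | hsz
    · have hW := card_cluster_le_two_mul_card_sdiff hδ hclean hc hsz
      exact one_le_two_mul_add_div_of_subset_union hu hv
        (sdiff_subset_neighbors hsym hp hc hc') (le_trans (by exact_mod_cast hsz) hW) hW
    · have hW := card_cluster_le_two_mul_card_sdiff hδ hclean (Ne.symm hc) hsz
      rw [add_comm]
      exact one_le_two_mul_add_div_of_subset_union hv hu
        (sdiff_subset_neighbors hsym (by rwa [hsym]) (Ne.symm hc) hc'.symm)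
        (le_trans (by exact_mod_cast hsz) hW) hW
  · have hc' : c' u ≠ c' v := by grind
    have hW := card_cluster_le_two_mul_card_inter hδ hclean hc (pos := pos)
    have hsz : #(cluster c u) = #(cluster c v) := by rw [cluster_eq_of_eq hc]
    exact one_le_two_mul_add_div_of_subset_union hu hv (inter_subset_neighbors hsym hp hc') hW
      (by rw [← hsz]; exact hW)

lemma card_sdiff_disagreePairs_le (hsym : ∀ u v, pos u v = pos v u) (hδ : δ ≤ 1/4)
    (hclean : IsCleanClustering pos δ c) (c' : V → ℕ) :
    (#(disagreePairs pos c \ disagreePairs pos c') : ℝ) ≤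
      8 * δ * #(disagreePairs pos c' \ disagreePairs pos c) := by
  set D := disagreePairs pos c
  set B := disagreePairs pos c' \ D
  set f : V → ℝ := fun u => #(neighbors B u) / #(cluster c u)
  have hf : ∀ u, 0 ≤ f u := fun u => by positivity
  have hload : ∀ u, #(neighbors D u) * f u ≤ 2 * δ * #(neighbors B u) := fun u => by
    have hu : (0 : ℝ) < #(cluster c u) := by exact_mod_cast card_cluster_pos c u
    calc #(neighbors D u) * f u ≤ 2 * δ * #(cluster c u) * f u :=
          mul_le_mul_of_nonneg_right (card_neighbors_disagreePairs_le hsym hclean u) (hf u)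
      _ = 2 * δ * #(neighbors B u) := by simp only [f]; field_simp
  calc (#(D \ disagreePairs pos c') : ℝ) = ∑ e ∈ D \ disagreePairs pos c', 1 := by simp
    _ ≤ ∑ e ∈ D \ disagreePairs pos c', 2 * (f e.1 + f e.2) :=
        sum_le_sum fun e he => one_le_two_mul_add_div_of_mem_sdiff hsym hδ hclean he
    _ ≤ ∑ e ∈ D, 2 * (f e.1 + f e.2) :=
        sum_le_sum_of_subset_of_nonneg sdiff_subset fun e _ _ => by
          have := hf e.1; have := hf e.2; positivity
    _ = 4 * ∑ e ∈ D, f e.1 := by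
        rw [← mul_sum, sum_add_distrib, sum_snd_eq_sum_fst_of_swap_mem
          (swap_mem_disagreePairs hsym)]
        ring
    _ = 4 * ∑ u, #(neighbors D u) * f u := by rw [sum_fst_eq_sum_card_neighbors_mul]
    _ ≤ 4 * ∑ u, 2 * δ * #(neighbors B u) :=
        mul_le_mul_of_nonneg_left (sum_le_sum fun u _ => hload u) (by norm_num)
    _ = 8 * δ * #B := by
        rw [card_eq_sum_card_neighbors, mul_sum, mul_sum]
        exact sum_congr rfl fun u _ => by ring

lemma card_disagreePairs_le_two_mul (hsym : ∀ u v, pos u v = pos v u) (hδ : δ ≤ 1/4)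
    (hclean : IsCleanClustering pos δ c) (c' : V → ℕ) :
    #(disagreePairs pos c) ≤ 2 * #(disagreePairs pos c') := by
  have hA := card_sdiff_disagreePairs_le hsym hδ hclean c'
  have hB : (8 * δ) * #(disagreePairs pos c' \ disagreePairs pos c) ≤
      2 * #(disagreePairs pos c' \ disagreePairs pos c) := by gcongr; linarith
  have hAB : #(disagreePairs pos c \ disagreePairs pos c') ≤
      2 * #(disagreePairs pos c' \ disagreePairs pos c) := by exact_mod_cast hA.trans hB
  have := card_sdiff_add_card_inter (disagreePairs pos c) (disagreePairs pos c')
  have := card_sdiff_add_card_inter (disagreePairs pos c') (disagreePairs pos c)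
  rw [inter_comm] at this
  omega

end Clustering

lemma card_disagreePairs_eq_two_mul_disagreements {V : Type*} [Fintype V] [LinearOrder V]
    {pos : V → V → Bool} (hsym : ∀ u v, pos u v = pos v u) (c : V → ℕ) :
    #(disagreePairs pos c) = 2 * disagreements pos c := by
  have hlt : disagreements pos c = #({e ∈ disagreePairs pos c | e.1 < e.2}) := by
    rw [disagreements]
    congr 1
    ext e
    simp only [mem_filter, mem_univ, true_and, mem_disagreePairs]
    exact ⟨fun h => ⟨⟨h.1.ne, h.2⟩, h.1⟩, fun h => ⟨h.2, h.1.2⟩⟩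
  have hgt : #({e ∈ disagreePairs pos c | ¬e.1 < e.2}) =
      #({e ∈ disagreePairs pos c | e.1 < e.2}) := by
    refine card_nbij' Prod.swap Prod.swap ?_ ?_ (fun _ _ => rfl) (fun _ _ => rfl)
    all_goals
      intro e he
      simp only [coe_filter, Set.mem_ofPred_eq, swap_mem_disagreePairs hsym, Prod.fst_swap,
        Prod.snd_swap] at he ⊢
    · exact ⟨he.1, lt_of_le_of_ne (not_lt.1 he.2) (mem_disagreePairs.1 he.1).1.symm⟩
    · exact ⟨he.1, he.2.asymm⟩
  rw [← card_filter_add_card_filter_not (fun e : V × V => e.1 < e.2), hgt, hlt]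
  ring

/-- If every cluster of a clustering `c` is `δ`-clean with `δ ≤ 1/4`, then the number of
disagreements of `c` is at most `4` times that of any clustering `c'` (in particular
of an optimal one). -/
theorem clean_clustering_four_approx {V : Type*} [Fintype V] [LinearOrder V]
    (pos : V → V → Bool) (hsym : ∀ u v, pos u v = pos v u)
    (δ : ℝ) (hδ : δ ≤ 1/4)
    (c : V → ℕ)
    (hclean : ∀ i : ℕ, IsClean pos δ (Finset.univ.filter (fun v => c v = i)))
    (c' : V → ℕ) :
    disagreements pos c ≤ 4 * disagreements pos c' := by
  have h := card_disagreePairs_le_two_mul hsym hδ hclean c'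
  rw [card_disagreePairs_eq_two_mul_disagreements hsym,
    card_disagreePairs_eq_two_mul_disagreements hsym] at h
  omega
end

section
/- There exists a clustering OPT' in which every non-singleton cluster is δ-clean and whose number of disagreements is at most (9/δ² + 1) times the minimum number of disagreements, for any 0 < δ < 1. -/
attribute [local instance] Classical.propDecidable

/-!
Let `ε = δ / 3` and let `B` be the vertices that are not `ε`-good in their cluster of an optimal
clustering. A vertex survives if it is not in `B` and fewer than an `ε` fraction of its cluster
lies in `B`; all other vertices become singletons. A surviving cluster has lost at most an `ε`
fraction of its vertices, which turns `ε`-goodness into `3ε`-goodness. The new disagreements are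
positive edges inside an old cluster `C` with a removed endpoint: at most
`|C|² / 2 ≤ |C ∩ B| |C| / 2ε` of them if `C` is dissolved, and at most `|C ∩ B| |C|` otherwise.
A vertex of `B` already has at least `ε |C|` disagreements, so the new ones number at most
`OPT / ε² = 9 OPT / δ²`.
-/

open Finset

theorem sum_card_filter_ne_eq_two_mul {α : Type*} [Fintype α] [LinearOrder α]
    (r : α → α → Prop) [DecidableRel r] (hr : ∀ u v, r u v → r v u) :
    ∑ v, #{u | u ≠ v ∧ r u v} = 2 * #{p : α × α | p.1 < p.2 ∧ r p.1 p.2} := by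
  have hsplit : ∀ v, #{u | u ≠ v ∧ r u v} = #{u | u < v ∧ r u v} + #{u | v < u ∧ r u v} := by
    intro v
    rw [← card_union_of_disjoint (disjoint_filter.2 fun u _ h₁ h₂ => lt_asymm h₁.1 h₂.1),
      ← filter_or]
    congr 1
    ext u
    simp only [mem_filter, mem_univ, true_and, ne_iff_lt_or_gt]
    tauto
  have hswap : ∑ v, #{u | v < u ∧ r u v} = ∑ v, #{u | u < v ∧ r u v} := by
    simp only [card_filter]
    rw [sum_comm]
    exact sum_congr rfl fun v _ => sum_congr rfl fun u _ =>
      if_congr (and_congr_right' ⟨hr v u, hr u v⟩) rfl rfl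
  rw [sum_congr rfl fun v _ => hsplit v, sum_add_distrib, hswap, two_mul, card_filter,
    Fintype.sum_prod_type, sum_comm]
  simp only [card_filter]

section Clustering

variable {V : Type*} [Fintype V] (pos : V → V → Bool)

def clusterOf (c : V → ℕ) (v : V) : Finset V := {u | c u = c v}

theorem mem_clusterOf {c : V → ℕ} {u v : V} : u ∈ clusterOf c v ↔ c u = c v := by
  simp [clusterOf]

theorem clusterOf_eq_of_eq {c : V → ℕ} {u v : V} (h : c u = c v) :
    clusterOf c u = clusterOf c v := by
  simp [clusterOf, h]

noncomputable def disagreeDegree (c : V → ℕ) (v : V) : ℕ := #{u | u ≠ v ∧ Disagree pos c u v}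

theorem sum_disagreeDegree [LinearOrder V] (hsym : ∀ u v, pos u v = pos v u) (c : V → ℕ) :
    ∑ v, disagreeDegree pos c v = 2 * disagreements pos c :=
  sum_card_filter_ne_eq_two_mul _ fun u v h => by
    unfold Disagree at h ⊢
    rw [hsym v u, eq_comm (a := c v), ne_comm (a := c v)]
    exact h

theorem mul_card_clusterOf_le_disagreeDegree {c : V → ℕ} {ε : ℝ} {v : V}
    (hv : ¬ IsGood pos ε v (clusterOf c v)) :
    ε * #(clusterOf c v) ≤ disagreeDegree pos c v := by
  set C := clusterOf c v
  have hvC : v ∈ C := mem_clusterOf.2 rfl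
  rw [IsGood, not_and_or, not_le, not_le] at hv
  rcases hv with hv | hv
  · have hsub : C \ Nplus pos v ⊆ ({u | u ≠ v ∧ Disagree pos c u v} : Finset V) := by
      intro u hu
      obtain ⟨huC, huN⟩ := mem_sdiff.1 hu
      simp only [Nplus, mem_insert, mem_filter, mem_univ, true_and, not_or] at huN
      simp only [mem_filter, mem_univ, true_and]
      exact ⟨huN.1, Or.inr ⟨by simpa using huN.2, mem_clusterOf.1 huC⟩⟩
    have hC : (#C : ℝ) = #(Nplus pos v ∩ C) + #(C \ Nplus pos v) := by
      rw [inter_comm]; exact_mod_cast (card_inter_add_card_sdiff C _).symm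
    have := card_le_card hsub
    unfold disagreeDegree
    linarith [(Nat.cast_le (α := ℝ)).2 this]
  · have hsub : Nplus pos v ∩ Cᶜ ⊆ ({u | u ≠ v ∧ Disagree pos c u v} : Finset V) := by
      intro u hu
      obtain ⟨huN, huC⟩ := mem_inter.1 hu
      have hne : u ≠ v := by rintro rfl; exact mem_compl.1 huC hvC
      simp only [Nplus, mem_insert, mem_filter, mem_univ, true_and, hne, false_or] at huN
      simp only [mem_filter, mem_univ, true_and]
      exact ⟨hne, Or.inl ⟨huN, fun h => mem_compl.1 huC (mem_clusterOf.2 h)⟩⟩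
    have := card_le_card hsub
    unfold disagreeDegree
    linarith [(Nat.cast_le (α := ℝ)).2 this]

theorem sum_le_sum_of_forall_sum_clusterOf_le {M : Type*} [AddCommMonoid M] [PartialOrder M]
    [IsOrderedAddMonoid M] (c : V → ℕ) {f g : V → M}
    (h : ∀ v, ∑ u ∈ clusterOf c v, f u ≤ ∑ u ∈ clusterOf c v, g u) : ∑ v, f v ≤ ∑ v, g v := by
  have hc : ∀ v ∈ (univ : Finset V), c v ∈ univ.image c :=
    fun v _ => mem_image_of_mem c (mem_univ v)
  rw [← sum_fiberwise_of_maps_to hc f, ← sum_fiberwise_of_maps_to hc g]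
  refine sum_le_sum fun j hj => ?_
  obtain ⟨v, -, rfl⟩ := mem_image.1 hj
  exact h v

theorem mul_sum_card_clusterOf_le_two_mul_disagreements [LinearOrder V]
    (hsym : ∀ u v, pos u v = pos v u) {c : V → ℕ} {B : Finset V} {ε : ℝ}
    (hB : ∀ v ∈ B, ¬ IsGood pos ε v (clusterOf c v)) :
    ε * ∑ v ∈ B, (#(clusterOf c v) : ℝ) ≤ 2 * disagreements pos c := by
  calc ε * ∑ v ∈ B, (#(clusterOf c v) : ℝ)
      ≤ ∑ v ∈ B, (disagreeDegree pos c v : ℝ) := by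
        rw [mul_sum]
        exact sum_le_sum fun v hv => mul_card_clusterOf_le_disagreeDegree pos (hB v hv)
    _ ≤ ∑ v, (disagreeDegree pos c v : ℝ) :=
        sum_le_sum_of_subset_of_nonneg (subset_univ B) fun _ _ _ => Nat.cast_nonneg _
    _ = 2 * disagreements pos c := by exact_mod_cast sum_disagreeDegree pos hsym c

end Clustering

section Isolate

variable {V : Type*} [Fintype V] {c : V → ℕ} {keep : V → Prop}

noncomputable def isolate (c : V → ℕ) (keep : V → Prop) (v : V) : ℕ :=
  if keep v then 2 * c v else 2 * (Fintype.equivFin V v : ℕ) + 1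

theorem isolate_eq_isolate_iff {u v : V} :
    isolate c keep u = isolate c keep v ↔ u = v ∨ keep u ∧ keep v ∧ c u = c v := by
  constructor
  · intro h
    unfold isolate at h
    split_ifs at h with hu hv hv
    · exact Or.inr ⟨hu, hv, by omega⟩
    · omega
    · omega
    · exact Or.inl ((Fintype.equivFin V).injective (Fin.ext (by omega)))
  · rintro (rfl | ⟨hu, hv, h⟩)
    · rfl
    · simp [isolate, hu, hv, h]

theorem clusterOf_isolate_of_not {v : V} (hv : ¬ keep v) :
    clusterOf (isolate c keep) v = {v} := by
  ext u
  simp [mem_clusterOf, isolate_eq_isolate_iff, hv]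

theorem clusterOf_isolate {v : V} (hv : keep v) :
    clusterOf (isolate c keep) v = (clusterOf c v).filter keep := by
  ext u
  simp only [mem_clusterOf, isolate_eq_isolate_iff, mem_filter, hv, true_and]
  constructor
  · rintro (rfl | ⟨hu, h⟩) <;> tauto
  · tauto

noncomputable def splitDegree (c : V → ℕ) (keep : V → Prop) (w : V) : ℕ :=
  #{u | u ≠ w ∧ c u = c w ∧ ¬ (keep u ∧ keep w)}

theorem two_mul_disagreements_isolate_le [LinearOrder V] (pos : V → V → Bool) :
    2 * disagreements pos (isolate c keep) ≤
      2 * disagreements pos c + ∑ w, splitDegree c keep w := by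
  have hsub : ({p : V × V | p.1 < p.2 ∧ Disagree pos (isolate c keep) p.1 p.2} : Finset _) ⊆
      ({p : V × V | p.1 < p.2 ∧ Disagree pos c p.1 p.2} : Finset _) ∪
        ({p : V × V | p.1 < p.2 ∧ c p.1 = c p.2 ∧ ¬ (keep p.1 ∧ keep p.2)} : Finset _) := by
    intro p
    simp only [mem_filter, mem_univ, true_and, mem_union]
    rintro ⟨hlt, hd⟩
    simp only [Disagree, ne_eq, isolate_eq_isolate_iff] at hd ⊢
    have := hlt.ne
    tauto
  unfold splitDegree
  rw [sum_card_filter_ne_eq_two_mul (fun u w => c u = c w ∧ ¬ (keep u ∧ keep w))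
    fun u w h => ⟨h.1.symm, by tauto⟩, ← mul_add]
  exact Nat.mul_le_mul_left 2 ((card_le_card hsub).trans (card_union_le _ _))

end Isolate

section Survives

variable {V : Type*} [Fintype V]

/-- With `c` optimal and `B` its `δ / 3`-bad vertices, `isolate c (Survives c B (δ / 3))` is the
clustering `OPT'`. -/
def Survives (c : V → ℕ) (B : Finset V) (ε : ℝ) (v : V) : Prop :=
  v ∉ B ∧ #(clusterOf c v ∩ B) < ε * #(clusterOf c v)

theorem filter_survives_eq_sdiff {c : V → ℕ} {B : Finset V} {ε : ℝ} {v : V}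
    (hv : Survives c B ε v) : (clusterOf c v).filter (Survives c B ε) = clusterOf c v \ B := by
  ext u
  simp only [mem_filter, mem_sdiff, Survives, and_congr_right_iff]
  intro hu
  rw [clusterOf_eq_of_eq (mem_clusterOf.1 hu)]
  exact ⟨And.left, fun h => ⟨h, hv.2⟩⟩

theorem IsGood.sdiff {pos : V → V → Bool} {δ : ℝ} {v : V} {C B : Finset V}
    (hv : IsGood pos (δ / 3) v C)
    (hB : #(C ∩ B) ≤ δ / 3 * #C) (hδ0 : 0 ≤ δ) (hδ1 : δ ≤ 1) : IsGood pos δ v (C \ B) := by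
  obtain ⟨hin, hout⟩ := hv
  set N := Nplus pos v
  have hcard : (#(C \ B) : ℝ) + #(C ∩ B) = #C := by exact_mod_cast card_sdiff_add_card_inter C B
  have hin' : (#(N ∩ C) : ℝ) ≤ #(N ∩ (C \ B)) + #(C ∩ B) := by
    have : N ∩ C ⊆ N ∩ (C \ B) ∪ C ∩ B := by
      intro u; simp only [mem_inter, mem_sdiff, mem_union]; tauto
    exact_mod_cast (card_le_card this).trans (card_union_le _ _)
  have hout' : (#(N ∩ (C \ B)ᶜ) : ℝ) ≤ #(N ∩ Cᶜ) + #(C ∩ B) := by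
    have : N ∩ (C \ B)ᶜ ⊆ N ∩ Cᶜ ∪ C ∩ B := by
      intro u; simp only [mem_inter, mem_sdiff, mem_union, mem_compl]; tauto
    exact_mod_cast (card_le_card this).trans (card_union_le _ _)
  have hb0 : (0 : ℝ) ≤ #(C ∩ B) := Nat.cast_nonneg _
  constructor <;> nlinarith

theorem isClean_isolate_survives (pos : V → V → Bool) {c : V → ℕ} {B : Finset V} {δ : ℝ}
    (hδ0 : 0 ≤ δ) (hδ1 : δ ≤ 1)
    (hB : ∀ v ∉ B, IsGood pos (δ / 3) v (clusterOf c v)) {i : ℕ}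
    (hi : 2 ≤ #{v | isolate c (Survives c B (δ / 3)) v = i}) :
    IsClean pos δ {v | isolate c (Survives c B (δ / 3)) v = i} := by
  obtain ⟨v, hv⟩ := card_pos.1 (by omega : 0 < #{v | isolate c (Survives c B (δ / 3)) v = i})
  have hcl : ({u | isolate c (Survives c B (δ / 3)) u = i} : Finset V) =
      clusterOf (isolate c (Survives c B (δ / 3))) v := by
    simp only [clusterOf, (mem_filter.1 hv).2]
  rw [hcl] at hi ⊢
  have hsurv : Survives c B (δ / 3) v := by
    by_contra h
    rw [clusterOf_isolate_of_not h, card_singleton] at hi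
    omega
  rw [clusterOf_isolate hsurv, filter_survives_eq_sdiff hsurv]
  intro w hw
  obtain ⟨hwC, hwB⟩ := mem_sdiff.1 hw
  have hgood := hB w hwB
  rw [clusterOf_eq_of_eq (mem_clusterOf.1 hwC)] at hgood
  exact hgood.sdiff hsurv.2.le hδ0 hδ1

theorem splitDegree_le_card_clusterOf {c : V → ℕ} {keep : V → Prop} (w : V) :
    splitDegree c keep w ≤ #(clusterOf c w) :=
  card_le_card fun _ hu => mem_clusterOf.2 (mem_filter.1 hu).2.2.1

theorem splitDegree_survives_le {c : V → ℕ} {B : Finset V} {ε : ℝ} {w : V}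
    (hw : Survives c B ε w) : splitDegree c (Survives c B ε) w ≤ #(clusterOf c w ∩ B) := by
  refine card_le_card fun u hu => ?_
  obtain ⟨-, hcu, hsu⟩ := (mem_filter.1 hu).2
  have hsu' : ¬ Survives c B ε u := fun h => hsu ⟨h, hw⟩
  rw [Survives, clusterOf_eq_of_eq hcu, not_and] at hsu'
  exact mem_inter.2 ⟨mem_clusterOf.2 hcu, by_contra fun huB => hsu' huB hw.2⟩

theorem mul_sum_splitDegree_clusterOf_le {c : V → ℕ} {B : Finset V} {ε : ℝ} (hε0 : 0 ≤ ε)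
    (hε : ε ≤ 1 / 2) (v : V) :
    ε * ∑ w ∈ clusterOf c v, (splitDegree c (Survives c B ε) w : ℝ) ≤
      #(clusterOf c v ∩ B) * #(clusterOf c v) := by
  set C := clusterOf c v
  have hC : ∀ w ∈ C, clusterOf c w = C := fun w hw => clusterOf_eq_of_eq (mem_clusterOf.1 hw)
  have hdeg : ∀ w ∈ C, (splitDegree c (Survives c B ε) w : ℝ) ≤ #C := fun w hw => by
    exact_mod_cast hC w hw ▸ splitDegree_le_card_clusterOf (c := c) (keep := Survives c B ε) w
  have hn0 : (0 : ℝ) ≤ #C := Nat.cast_nonneg _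
  by_cases hdis : #(C ∩ B) < ε * #C
  · have hw : ∀ w ∈ C,
        (splitDegree c (Survives c B ε) w : ℝ) ≤ #(C ∩ B) + if w ∈ B then (#C : ℝ) else 0 := by
      intro w hwC
      by_cases hwB : w ∈ B
      · simpa [hwB] using (hdeg w hwC).trans (le_add_of_nonneg_left (Nat.cast_nonneg _))
      · have hsurv : Survives c B ε w := ⟨hwB, hC w hwC ▸ hdis⟩
        simpa [hwB, hC w hwC] using splitDegree_survives_le hsurv
    have hsum : ∑ w ∈ C, (splitDegree c (Survives c B ε) w : ℝ) ≤ 2 * (#(C ∩ B) * #C) := by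
      calc _ ≤ ∑ w ∈ C, ((#(C ∩ B) : ℝ) + if w ∈ B then (#C : ℝ) else 0) := sum_le_sum hw
        _ = 2 * (#(C ∩ B) * #C) := by
          rw [sum_add_distrib, sum_ite_mem, sum_const, sum_const, nsmul_eq_mul, nsmul_eq_mul]
          ring
    have hb0 : (0 : ℝ) ≤ #(C ∩ B) * #C := mul_nonneg (Nat.cast_nonneg _) hn0
    nlinarith
  · calc ε * ∑ w ∈ C, (splitDegree c (Survives c B ε) w : ℝ)
        ≤ ε * ∑ w ∈ C, (#C : ℝ) := mul_le_mul_of_nonneg_left (sum_le_sum hdeg) hε0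
      _ = ε * #C * #C := by rw [sum_const, nsmul_eq_mul]; ring
      _ ≤ #(C ∩ B) * #C := mul_le_mul_of_nonneg_right (not_lt.1 hdis) hn0

theorem mul_sum_splitDegree_le {c : V → ℕ} {B : Finset V} {ε : ℝ} (hε0 : 0 ≤ ε)
    (hε : ε ≤ 1 / 2) :
    ε * ∑ w, (splitDegree c (Survives c B ε) w : ℝ) ≤ ∑ v ∈ B, (#(clusterOf c v) : ℝ) := by
  calc ε * ∑ w, (splitDegree c (Survives c B ε) w : ℝ)
      = ∑ w, ε * (splitDegree c (Survives c B ε) w : ℝ) := mul_sum _ _ _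
    _ ≤ ∑ w, if w ∈ B then (#(clusterOf c w) : ℝ) else 0 := by
      refine sum_le_sum_of_forall_sum_clusterOf_le c fun v => ?_
      have hcl : ∀ w ∈ clusterOf c v ∩ B, (#(clusterOf c w) : ℝ) = #(clusterOf c v) :=
        fun w hw => by rw [clusterOf_eq_of_eq (mem_clusterOf.1 (mem_inter.1 hw).1)]
      rw [← mul_sum, sum_ite_mem, sum_congr rfl hcl, sum_const, nsmul_eq_mul]
      exact mul_sum_splitDegree_clusterOf_le hε0 hε v
    _ = ∑ v ∈ B, (#(clusterOf c v) : ℝ) := by rw [sum_ite_mem, univ_inter]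

theorem disagreements_isolate_survives_le [LinearOrder V] (pos : V → V → Bool)
    (hsym : ∀ u v, pos u v = pos v u) {c : V → ℕ} {B : Finset V} {δ : ℝ} (hδ0 : 0 < δ)
    (hδ1 : δ ≤ 3 / 2)
    (hB : ∀ v ∈ B, ¬ IsGood pos (δ / 3) v (clusterOf c v)) :
    (disagreements pos (isolate c (Survives c B (δ / 3))) : ℝ) ≤
      (9 / δ ^ 2 + 1) * disagreements pos c := by
  have hsplit : 2 * (disagreements pos (isolate c (Survives c B (δ / 3))) : ℝ) ≤
      2 * disagreements pos c + ∑ w, (splitDegree c (Survives c B (δ / 3)) w : ℝ) := by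
    exact_mod_cast two_mul_disagreements_isolate_le (c := c) (keep := Survives c B (δ / 3)) pos
  set S := ∑ w, (splitDegree c (Survives c B (δ / 3)) w : ℝ)
  have hS := mul_sum_splitDegree_le (c := c) (B := B) (by positivity : 0 ≤ δ / 3) (by linarith)
  have hT := mul_sum_card_clusterOf_le_two_mul_disagreements pos hsym hB
  have hS' : S ≤ 2 * (9 / δ ^ 2 * disagreements pos c) := by
    rw [← mul_assoc, ← mul_div_assoc, div_mul_eq_mul_div, le_div_iff₀ (by positivity)]
    nlinarith [mul_le_mul_of_nonneg_left hS (by positivity : 0 ≤ δ / 3)]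
  calc (disagreements pos (isolate c (Survives c B (δ / 3))) : ℝ)
      ≤ disagreements pos c + 9 / δ ^ 2 * disagreements pos c := by linarith
    _ = (9 / δ ^ 2 + 1) * disagreements pos c := by ring

end Survives

/-- There exists a clustering `OPT'` in which every non-singleton cluster is `δ`-clean
and whose number of disagreements is at most `(9/δ² + 1)` times the minimum number of
disagreements (i.e. at most `(9/δ² + 1)` times the cost of every clustering). -/
theorem exists_clean_clustering {V : Type*} [Fintype V] [LinearOrder V]
    (pos : V → V → Bool) (hsym : ∀ u v, pos u v = pos v u)
    (δ : ℝ) (hδ0 : 0 < δ) (hδ1 : δ < 1) :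
    ∃ c' : V → ℕ,
      (∀ i : ℕ, 2 ≤ (Finset.univ.filter (fun v => c' v = i)).card →
        IsClean pos δ (Finset.univ.filter (fun v => c' v = i))) ∧
      (∀ c : V → ℕ,
        (disagreements pos c' : ℝ) ≤ (9 / δ ^ 2 + 1) * (disagreements pos c : ℝ)) := by
  set opt := Function.argmin (disagreements pos)
  set B : Finset V := {v | ¬ IsGood pos (δ / 3) v (clusterOf opt v)}
  have hB : ∀ v, v ∈ B ↔ ¬ IsGood pos (δ / 3) v (clusterOf opt v) := by simp [B]
  refine ⟨isolate opt (Survives opt B (δ / 3)),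
    fun i => isClean_isolate_survives pos hδ0.le hδ1.le fun v hv => not_not.1 ((hB v).not.1 hv),
    fun c => ?_⟩
  have hmin : (disagreements pos opt : ℝ) ≤ disagreements pos c := by
    exact_mod_cast Function.argmin_le (disagreements pos) c
  calc (disagreements pos (isolate opt (Survives opt B (δ / 3))) : ℝ)
      ≤ (9 / δ ^ 2 + 1) * disagreements pos opt :=
        disagreements_isolate_survives_le pos hsym hδ0 (by linarith) fun v => (hB v).1
    _ ≤ (9 / δ ^ 2 + 1) * disagreements pos c := by gcongr
end

section
/- For the correlation clustering instance on n+1 vertices with one center c, where all edges incident to c are positive and all other edges are negative, the assignment x_e = 1/2 for positive edges and x_e = 1 for negative edges is feasible for the standard LP and has objective value n/2. -/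
/-!
Off the diagonal the solution takes values in `[1/2, 1]`, so any path through a third vertex
has length at least `1` and the triangle inequalities hold. In the objective every negative
edge is cut at full length and costs nothing, while each of the `n` positive edges at the
center is half cut and costs `1/2`.
-/

open Finset

section

variable {V : Type*} [DecidableEq V]

noncomputable def starSolution (c u v : V) : ℝ :=
  if u = v then 0 else if u = c ∨ v = c then 1 / 2 else 1

theorem starSolution_comm (c u v : V) : starSolution c u v = starSolution c v u := by
  unfold starSolution
  rcases eq_or_ne u v with rfl | huv
  · rfl
  · simp only [huv, huv.symm, if_false, or_comm]

@[simp]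
theorem starSolution_self (c u : V) : starSolution c u u = 0 := if_pos rfl

theorem starSolution_le_one (c u v : V) : starSolution c u v ≤ 1 := by
  unfold starSolution; split_ifs <;> norm_num

theorem half_le_starSolution (c : V) {u v : V} (huv : u ≠ v) : 1 / 2 ≤ starSolution c u v := by
  simp only [starSolution, huv, if_false]; split_ifs <;> norm_num

theorem starSolution_nonneg (c u v : V) : 0 ≤ starSolution c u v := by
  rcases eq_or_ne u v with rfl | huv
  · simp
  · exact le_trans (by norm_num) (half_le_starSolution c huv)

theorem starSolution_triangle (c u v w : V) :
    starSolution c u w ≤ starSolution c u v + starSolution c v w := by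
  rcases eq_or_ne v u with rfl | hvu
  · simp
  rcases eq_or_ne v w with rfl | hvw
  · simp
  linarith [starSolution_le_one c u w, half_le_starSolution c hvu.symm,
    half_le_starSolution c hvw]

theorem starSolution_edgeCost (c : V) {u v : V} (huv : u ≠ v) :
    (if u = c ∨ v = c then starSolution c u v else 1 - starSolution c u v) =
      (if u = c then 1 / 2 else 0) + (if v = c then 1 / 2 else 0) := by
  rcases eq_or_ne u c with rfl | huc
  · simp [starSolution, huv, huv.symm]
  rcases eq_or_ne v c with rfl | hvc
  · simp [starSolution, huv]
  · simp [starSolution, huv, huc, hvc]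

end

section

variable {V : Type*} [Fintype V] [LinearOrder V]

theorem card_filter_lt_add_card_filter_gt (c : V) :
    #(univ.filter (c < ·)) + #(univ.filter (· < c)) = Fintype.card V - 1 := by
  rw [← card_union_of_disjoint (disjoint_filter.2 fun _ _ h₁ h₂ => lt_asymm h₁ h₂),
    ← card_univ, ← card_erase_of_mem (mem_univ c)]
  congr 1
  ext v
  simp [ne_comm (a := v)]

theorem sum_pairs_lt_ite_fst_eq (c : V) (a : ℝ) :
    ∑ p ∈ univ.filter (fun p : V × V => p.1 < p.2), (if p.1 = c then a else 0) =
      #(univ.filter (c < ·)) * a := by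
  rw [sum_filter, Fintype.sum_prod_type, sum_eq_single c (fun b _ hb => by simp [hb]) (by simp)]
  simp [sum_ite]

theorem sum_pairs_lt_ite_snd_eq (c : V) (a : ℝ) :
    ∑ p ∈ univ.filter (fun p : V × V => p.1 < p.2), (if p.2 = c then a else 0) =
      #(univ.filter (· < c)) * a := by
  rw [sum_filter, Fintype.sum_prod_type_right,
    sum_eq_single c (fun b _ hb => by simp [hb]) (by simp)]
  simp [sum_ite]

theorem sum_pairs_lt_starSolution_edgeCost (c : V) :
    ∑ p ∈ univ.filter (fun p : V × V => p.1 < p.2),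
        (if p.1 = c ∨ p.2 = c then starSolution c p.1 p.2 else 1 - starSolution c p.1 p.2) =
      ((Fintype.card V : ℝ) - 1) / 2 := by
  rw [sum_congr rfl fun p hp => starSolution_edgeCost c (mem_filter.1 hp).2.ne,
    sum_add_distrib, sum_pairs_lt_ite_fst_eq, sum_pairs_lt_ite_snd_eq, ← add_mul,
    ← Nat.cast_add, card_filter_lt_add_card_filter_gt,
    Nat.cast_pred (Fintype.card_pos_iff.2 ⟨c⟩)]
  ring

end

/-- For the star instance on `n+1` vertices (center `c = 0`, positive edges exactly those
incident to `c`, all other edges negative), the assignment `x_e = 1/2` on positive edges and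
`x_e = 1` on negative edges is feasible for the standard LP and has objective value `n/2`. -/
theorem star_lp_solution (n : ℕ) :
    ∀ c : Fin (n + 1), c = 0 →
    ∀ x : Fin (n + 1) → Fin (n + 1) → ℝ,
      (x = fun u v => if u = v then 0 else if u = c ∨ v = c then 1/2 else 1) →
      (∀ u v, x u v = x v u) ∧
      (∀ u, x u u = 0) ∧
      (∀ u v, 0 ≤ x u v ∧ x u v ≤ 1) ∧
      (∀ u v w, x u w ≤ x u v + x v w) ∧
      (∑ p ∈ Finset.univ.filter (fun p : Fin (n + 1) × Fin (n + 1) => p.1 < p.2),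
          (if p.1 = c ∨ p.2 = c then x p.1 p.2 else 1 - x p.1 p.2)) = (n : ℝ) / 2 := by
  rintro c - x rfl
  refine ⟨starSolution_comm c, starSolution_self c,
    fun u v => ⟨starSolution_nonneg c u v, starSolution_le_one c u v⟩,
    starSolution_triangle c, ?_⟩
  have objective := sum_pairs_lt_starSolution_edgeCost c
  rwa [Fintype.card_fin, Nat.cast_succ, add_sub_cancel_right] at objective
end

section
/- For the star instance on n+1 vertices (center c with positive edges to all other n vertices, and all other edges negative), every clustering has at least n-1 disagreements. Consequently, combined with an LP solution of value n/2, the integrality gap of the standard LP is at least 2 - 2/n. -/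
attribute [local instance] Classical.propDecidable

/-! Let `m` be the least leaf in the cluster of the centre `c` (if there is one). Every other
leaf `v` yields its own disagreement: the positive edge `cv` if `v` is outside that cluster, the
negative edge `mv` otherwise. Hence a star with `n` leaves has at least `n - 1` disagreements,
against the LP value `n / 2`. -/

namespace Star

variable {V : Type*} [Fintype V] [LinearOrder V]

lemma exists_least_leaf_in_center_cluster (c : V) (f : V → ℕ) :
    ∃ m, ∀ v, v ≠ c → f v = f c → m ≠ c ∧ f m = f c ∧ m ≤ v := by
  set S := Finset.univ.filter fun v => v ≠ c ∧ f v = f c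
  rcases S.eq_empty_or_nonempty with hS | hS
  · refine ⟨c, fun v hv hf => absurd ?_ (Finset.notMem_empty v)⟩
    rw [← hS]
    simp [S, hv, hf]
  · obtain ⟨hmc, hmf⟩ := (Finset.mem_filter.1 (S.min'_mem hS)).2
    exact ⟨S.min' hS, fun v hv hf => ⟨hmc, hmf, S.min'_le v (by simp [S, hv, hf])⟩⟩

theorem card_sub_two_le_disagreements (pos : V → V → Bool) {c : V} (hc : IsBot c)
    (hcenter : ∀ v, v ≠ c → pos c v = true)
    (hleaf : ∀ u v, u ≠ c → v ≠ c → pos u v = false) (f : V → ℕ) :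
    Fintype.card V - 2 ≤ disagreements pos f := by
  obtain ⟨m, hm⟩ := exists_least_leaf_in_center_cluster c f
  let witness : V → V × V := fun v => if f v = f c then (m, v) else (c, v)
  have hmaps : Set.MapsTo witness ((Finset.univ.erase c).erase m)
      (Finset.univ.filter fun p : V × V => p.1 < p.2 ∧ Disagree pos f p.1 p.2) := by
    intro v hv
    obtain ⟨hvc, hvm⟩ : v ≠ c ∧ v ≠ m := by simpa using hv
    simp only [witness, Finset.coe_filter, Finset.mem_univ, true_and, Set.mem_ofPred_eq]
    split_ifs with hf
    · obtain ⟨hmc, hmf, hmv⟩ := hm v hvc hf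
      exact ⟨lt_of_le_of_ne hmv (Ne.symm hvm), Or.inr ⟨hleaf m v hmc hvc, hmf.trans hf.symm⟩⟩
    · exact ⟨lt_of_le_of_ne (hc v) (Ne.symm hvc), Or.inl ⟨hcenter v hvc, fun h => hf h.symm⟩⟩
  have hinj : Set.InjOn witness ((Finset.univ.erase c).erase m) := by
    intro u _ v _ huv
    simpa [witness, apply_ite Prod.snd] using congrArg Prod.snd huv
  calc Fintype.card V - 2 = (Finset.univ.card - 1) - 1 := by simp [Nat.sub_sub]
    _ ≤ ((Finset.univ.erase c).erase m).card :=
      (Nat.sub_le_sub_right (Finset.pred_card_le_card_erase) 1).trans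
        Finset.pred_card_le_card_erase
    _ ≤ disagreements pos f := Finset.card_le_card_of_injOn witness hmaps hinj

end Star

lemma two_sub_two_div_mul_half_le (n : ℕ) :
    (2 - 2 / (n : ℝ)) * ((n : ℝ) / 2) ≤ ((n - 1 : ℕ) : ℝ) := by
  rcases Nat.eq_zero_or_pos n with rfl | hn
  · simp
  · rw [Nat.cast_sub hn]
    field_simp
    simp

/-- For the star instance on `n+1` vertices (center `0`; edges incident to `0` positive,
all other edges negative), every clustering has at least `n - 1` disagreements; consequently,
combined with the LP solution of value `n/2`, every clustering has cost at least
`(2 - 2/n) · (n/2)`, i.e. the integrality gap of the standard LP is at least `2 - 2/n`. -/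
theorem star_integrality_gap (n : ℕ)
    (pos : Fin (n + 1) → Fin (n + 1) → Bool)
    (hpos : pos = fun u v => decide (u ≠ v ∧ (u = 0 ∨ v = 0))) :
    (∀ f : Fin (n + 1) → ℕ, n - 1 ≤ disagreements pos f) ∧
    (∀ f : Fin (n + 1) → ℕ,
      (2 - 2 / (n : ℝ)) * ((n : ℝ) / 2) ≤ (disagreements pos f : ℝ)) := by
  have hlower (f : Fin (n + 1) → ℕ) : n - 1 ≤ disagreements pos f := by
    simpa using Star.card_sub_two_le_disagreements pos (c := 0) (fun v => Fin.zero_le v)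
      (fun v hv => by simp [hpos, hv.symm]) (fun u v hu hv => by simp [hpos, hu, hv]) f
  exact ⟨hlower, fun f => (two_sub_two_div_mul_half_le n).trans (by exact_mod_cast hlower f)⟩
end

section
/- In the KwikCluster algorithm, an edge (u,v) is in disagreement with the output clustering if and only if there exists a bad triangle T = (u,v,w) such that w or one of u,v was chosen as pivot at a step when all three of u,v,w were still active; moreover each mistake is charged to a unique bad triangle. -/
/-!
Let `τ x` be the step whose cluster contains `x`; every vertex has one because each step removes
its active pivot. If `w = p t` is charged for `(u, v)`, then `t ≤ min (τ u) (τ v)` because `u`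
and `v` are active at `t`, while the bad triangle has a positive edge from `w` to `u` or `v`,
putting that vertex in the cluster of step `t`. Hence `t = min (τ u) (τ v)`, which gives
uniqueness. At that step `w` separates `u` from `v` iff it is positively joined to just one of
them, so `(u, v)` is a mistake iff it is positive exactly when separated, i.e. iff `(u, v, w)` is
bad.
-/

variable {V : Type*} [Fintype V] [DecidableEq V]

/-- Active vertices of KwikCluster run with pivot sequence `p` : at step `t` the cluster of
the pivot `p t` (the pivot together with its active positive neighbours) is removed. -/
def kwikActive (pos : V → V → Bool) (p : ℕ → V) : ℕ → Finset V
  | 0 => Finset.univ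
  | t + 1 =>
      kwikActive pos p t \
        (kwikActive pos p t).filter (fun v => v = p t ∨ pos (p t) v = true)

/-- The cluster produced by KwikCluster at step `t`. -/
def kwikCluster (pos : V → V → Bool) (p : ℕ → V) (t : ℕ) : Finset V :=
  (kwikActive pos p t).filter (fun v => v = p t ∨ pos (p t) v = true)

/-- `(u,v)` is in disagreement with the output clustering of KwikCluster: a positive edge
disagrees if exactly one endpoint is in the cluster of some step, a negative edge disagrees
if both endpoints are in the cluster of some step. -/
def kwikMistake (pos : V → V → Bool) (p : ℕ → V) (u v : V) : Prop :=
  if pos u v = true then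
    ∃ t, (u ∈ kwikCluster pos p t ∧ v ∉ kwikCluster pos p t) ∨
         (u ∉ kwikCluster pos p t ∧ v ∈ kwikCluster pos p t)
  else
    ∃ t, u ∈ kwikCluster pos p t ∧ v ∈ kwikCluster pos p t

/-- `(u,v,w)` is a bad triangle: distinct vertices, two positive edges, one negative edge. -/
def BadTriple (pos : V → V → Bool) (u v w : V) : Prop :=
  u ≠ v ∧ u ≠ w ∧ v ≠ w ∧
    ((pos u v ∧ pos u w ∧ ¬ pos v w) ∨ (pos u v ∧ ¬ pos u w ∧ pos v w) ∨
      (¬ pos u v ∧ pos u w ∧ pos v w))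

section BadTriple

variable {pos : V → V → Bool} {u v w : V}

omit [Fintype V] [DecidableEq V] in
lemma BadTriple.pos_or_pos (h : BadTriple pos u v w) : pos u w = true ∨ pos v w = true := by
  rcases h with ⟨-, -, -, ⟨-, h, -⟩ | ⟨-, -, h⟩ | ⟨-, h, -⟩⟩ <;> simp [h]

omit [Fintype V] [DecidableEq V] in
lemma badTriple_iff_pos_iff_separates (hsym : ∀ u v, pos u v = pos v u) (huv : u ≠ v)
    (hw : (u = w ∨ pos w u = true) ∨ (v = w ∨ pos w v = true)) :
    BadTriple pos u v w ↔
      (pos u v = true ↔ ¬((u = w ∨ pos w u = true) ↔ (v = w ∨ pos w v = true))) := by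
  unfold BadTriple
  rcases eq_or_ne u w with rfl | huw
  · cases pos u v <;> simp [huv, huv.symm]
  rcases eq_or_ne v w with rfl | hvw
  · rw [hsym u v]
    cases pos v u <;> simp [huv]
  rw [hsym u w, hsym v w]
  revert hw
  cases pos u v <;> cases pos w u <;> cases pos w v <;> simp [huv, huw, hvw]

end BadTriple

section KwikCluster

variable {pos : V → V → Bool} {p : ℕ → V} {s t tu tv : ℕ} {u v w : V}

lemma kwikActive_succ (pos : V → V → Bool) (p : ℕ → V) (t : ℕ) :
    kwikActive pos p (t + 1) = kwikActive pos p t \ kwikCluster pos p t :=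
  rfl

lemma mem_kwikCluster :
    u ∈ kwikCluster pos p t ↔ u ∈ kwikActive pos p t ∧ (u = p t ∨ pos (p t) u = true) :=
  Finset.mem_filter

lemma mem_kwikCluster_of_mem_kwikActive (hu : u ∈ kwikActive pos p t) :
    u ∈ kwikCluster pos p t ↔ u = p t ∨ pos (p t) u = true := by
  simp only [mem_kwikCluster, hu, true_and]

lemma kwikCluster_subset_kwikActive : kwikCluster pos p t ⊆ kwikActive pos p t :=
  Finset.filter_subset _ _

lemma kwikActive_antitone (pos : V → V → Bool) (p : ℕ → V) : Antitone (kwikActive pos p) :=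
  antitone_nat_of_succ_le fun t => by
    rw [kwikActive_succ]
    exact Finset.sdiff_subset

lemma kwikActive_succ_ssubset (ht : p t ∈ kwikActive pos p t) :
    kwikActive pos p (t + 1) ⊂ kwikActive pos p t := by
  rw [kwikActive_succ]
  exact Finset.sdiff_ssubset kwikCluster_subset_kwikActive
    ⟨p t, mem_kwikCluster.mpr ⟨ht, Or.inl rfl⟩⟩

lemma card_kwikActive_add_le (hp : ∀ t, p t ∈ kwikActive pos p t) (t : ℕ) :
    (kwikActive pos p t).card + t ≤ Fintype.card V := by
  induction t with
  | zero => simp [kwikActive]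
  | succ t ih =>
    have := Finset.card_lt_card (kwikActive_succ_ssubset (hp t))
    omega

lemma exists_mem_kwikCluster
    (hp : ∀ t, (kwikActive pos p t).Nonempty → p t ∈ kwikActive pos p t) (u : V) :
    ∃ t, u ∈ kwikCluster pos p t := by
  by_contra! hnever
  have hactive : ∀ t, u ∈ kwikActive pos p t := by
    intro t
    induction t with
    | zero => simp [kwikActive]
    | succ t ih => exact Finset.mem_sdiff.mpr ⟨ih, hnever t⟩
  have := card_kwikActive_add_le (fun t => hp t ⟨u, hactive t⟩) (Fintype.card V + 1)
  omega

lemma mem_kwikActive_iff_le (hs : u ∈ kwikCluster pos p s) :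
    u ∈ kwikActive pos p t ↔ t ≤ s := by
  refine ⟨fun ht => ?_,
    fun hts => kwikActive_antitone pos p hts (kwikCluster_subset_kwikActive hs)⟩
  by_contra! hst
  have hgone : u ∉ kwikActive pos p (s + 1) := fun h => (Finset.mem_sdiff.mp h).2 hs
  exact hgone (kwikActive_antitone pos p hst ht)

lemma mem_kwikCluster_iff_eq (hs : u ∈ kwikCluster pos p s) :
    u ∈ kwikCluster pos p t ↔ t = s := by
  refine ⟨fun ht => le_antisymm ?_ ?_, fun hts => hts ▸ hs⟩
  · exact (mem_kwikActive_iff_le hs).mp (kwikCluster_subset_kwikActive ht)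
  · exact (mem_kwikActive_iff_le ht).mp (kwikCluster_subset_kwikActive hs)

lemma kwikMistake_iff (hu : u ∈ kwikCluster pos p tu) (hv : v ∈ kwikCluster pos p tv) :
    kwikMistake pos p u v ↔ (pos u v = true ↔ tu ≠ tv) := by
  unfold kwikMistake
  simp only [mem_kwikCluster_iff_eq hu, mem_kwikCluster_iff_eq hv]
  split_ifs with h <;> simp only [h] <;> grind

lemma eq_min_of_badTriple_pivot (hsym : ∀ u v, pos u v = pos v u)
    (hu : u ∈ kwikCluster pos p tu) (hv : v ∈ kwikCluster pos p tv)
    (hbad : BadTriple pos u v (p t)) (hut : u ∈ kwikActive pos p t)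
    (hvt : v ∈ kwikActive pos p t) : t = min tu tv := by
  have hclustered : t = tu ∨ t = tv := by
    rw [← mem_kwikCluster_iff_eq hu, ← mem_kwikCluster_iff_eq hv,
      mem_kwikCluster_of_mem_kwikActive hut, mem_kwikCluster_of_mem_kwikActive hvt,
      hsym (p t) u, hsym (p t) v]
    exact hbad.pos_or_pos.imp Or.inr Or.inr
  have htu := (mem_kwikActive_iff_le hu).mp hut
  have htv := (mem_kwikActive_iff_le hv).mp hvt
  omega

lemma badTriple_pivot_iff (hsym : ∀ u v, pos u v = pos v u)
    (hp : ∀ t, (kwikActive pos p t).Nonempty → p t ∈ kwikActive pos p t)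
    (hu : u ∈ kwikCluster pos p tu) (hv : v ∈ kwikCluster pos p tv) :
    (BadTriple pos u v w ∧ ∃ t, u ∈ kwikActive pos p t ∧ v ∈ kwikActive pos p t ∧
        w ∈ kwikActive pos p t ∧ p t = w) ↔
      BadTriple pos u v w ∧ p (min tu tv) = w := by
  refine and_congr_right fun hbad => ⟨?_, fun hw => ?_⟩
  · rintro ⟨t, hut, hvt, -, rfl⟩
    rw [← eq_min_of_badTriple_pivot hsym hu hv hbad hut hvt]
  · have hut : u ∈ kwikActive pos p (min tu tv) :=
      (mem_kwikActive_iff_le hu).mpr (min_le_left _ _)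
    have hvt : v ∈ kwikActive pos p (min tu tv) :=
      (mem_kwikActive_iff_le hv).mpr (min_le_right _ _)
    exact ⟨min tu tv, hut, hvt, hw ▸ hp _ ⟨u, hut⟩, hw⟩

lemma kwikMistake_iff_badTriple (hsym : ∀ u v, pos u v = pos v u) (huv : u ≠ v)
    (hu : u ∈ kwikCluster pos p tu) (hv : v ∈ kwikCluster pos p tv) :
    kwikMistake pos p u v ↔ BadTriple pos u v (p (min tu tv)) := by
  have hut : u ∈ kwikActive pos p (min tu tv) :=
    (mem_kwikActive_iff_le hu).mpr (min_le_left _ _)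
  have hvt : v ∈ kwikActive pos p (min tu tv) :=
    (mem_kwikActive_iff_le hv).mpr (min_le_right _ _)
  have hu_pivot : (u = p (min tu tv) ∨ pos (p (min tu tv)) u = true) ↔ min tu tv = tu :=
    (mem_kwikCluster_of_mem_kwikActive hut).symm.trans (mem_kwikCluster_iff_eq hu)
  have hv_pivot : (v = p (min tu tv) ∨ pos (p (min tu tv)) v = true) ↔ min tu tv = tv :=
    (mem_kwikCluster_of_mem_kwikActive hvt).symm.trans (mem_kwikCluster_iff_eq hv)
  have hsplit : tu ≠ tv ↔ ¬(min tu tv = tu ↔ min tu tv = tv) := by omega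
  rw [kwikMistake_iff hu hv, hsplit, badTriple_iff_pos_iff_separates hsym huv
    ((min_choice tu tv).imp hu_pivot.mpr hv_pivot.mpr), hu_pivot, hv_pivot]

end KwikCluster

/-- An edge `(u,v)` is in disagreement with the KwikCluster output iff there is a bad triangle
`(u,v,w)` whose third vertex `w` is chosen as pivot at a step when all three of `u,v,w` are
still active; moreover each mistake is charged to a unique such bad triangle. -/
theorem kwik_mistake_iff_bad_triangle (pos : V → V → Bool)
    (hsym : ∀ u v, pos u v = pos v u) (p : ℕ → V)
    (hp : ∀ t, (kwikActive pos p t).Nonempty → p t ∈ kwikActive pos p t)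
    (u v : V) (huv : u ≠ v) :
    (kwikMistake pos p u v ↔
      ∃ w, BadTriple pos u v w ∧
        ∃ t, u ∈ kwikActive pos p t ∧ v ∈ kwikActive pos p t ∧
          w ∈ kwikActive pos p t ∧ p t = w) ∧
    (kwikMistake pos p u v →
      ∃! w, BadTriple pos u v w ∧
        ∃ t, u ∈ kwikActive pos p t ∧ v ∈ kwikActive pos p t ∧
          w ∈ kwikActive pos p t ∧ p t = w) := by
  obtain ⟨tu, hu⟩ := exists_mem_kwikCluster hp u
  obtain ⟨tv, hv⟩ := exists_mem_kwikCluster hp v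
  simp only [badTriple_pivot_iff hsym hp hu hv, kwikMistake_iff_badTriple hsym huv hu hv]
  exact ⟨⟨fun h => ⟨_, h, rfl⟩, fun ⟨_, h, hw⟩ => hw ▸ h⟩,
    fun h => ⟨_, ⟨h, rfl⟩, fun _ hw => hw.2.symm⟩⟩
end

section
/- For the signature σ = (+,-,-) and the rounding functions f^-(x) = x and any f^+ satisfying 0 ≤ f^+(x) ≤ 2x on [0,1], the inequality 2·LP^σ(x,y,z) ≥ ALG^σ(x,y,z) holds for all edge lengths x,y,z ∈ [0,1] satisfying the triangle inequality, where ALG^σ(x,y,z) = 2 - 2yz - 2f^+(x) + f^+(x)y + f^+(x)z and LP^σ(x,y,z) = 2 + x - y - z - xyz - f^+(x)y - f^+(x)z + 2f^+(x)yz. -/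
/-!
With `p = f⁺(x)`, the defect `2·LP − ALG` is `(1 − y)(1 − z)(2 + 3p) + (1 − yz)(2x − p)`: the
first summand is nonnegative since `y, z ≤ 1` and `p ≥ 0`, the second since `yz ≤ 1` and `p ≤ 2x`.
-/

def algPMM (p y z : ℝ) : ℝ := 2 - 2*y*z - 2*p + p*y + p*z

def lpPMM (p x y z : ℝ) : ℝ := 2 + x - y - z - x*y*z - p*y - p*z + 2*p*y*z

theorem two_mul_lpPMM_sub_algPMM (p x y z : ℝ) :
    2 * lpPMM p x y z - algPMM p y z =
      (1 - y) * (1 - z) * (2 + 3 * p) + (1 - y * z) * (2 * x - p) := by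
  unfold lpPMM algPMM
  ring

theorem algPMM_le_two_mul_lpPMM {p x y z : ℝ} (hp₀ : 0 ≤ p) (hp : p ≤ 2 * x)
    (hy : y ∈ Set.Icc (0 : ℝ) 1) (hz : z ∈ Set.Icc (0 : ℝ) 1) :
    algPMM p y z ≤ 2 * lpPMM p x y z := by
  have hyz : 0 ≤ (1 - y) * (1 - z) * (2 + 3 * p) :=
    mul_nonneg (mul_nonneg (sub_nonneg.2 hy.2) (sub_nonneg.2 hz.2)) (by positivity)
  have hpx : 0 ≤ (1 - y * z) * (2 * x - p) :=
    mul_nonneg (sub_nonneg.2 (mul_le_one₀ hy.2 hz.1 hz.2)) (sub_nonneg.2 hp)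
  linarith [two_mul_lpPMM_sub_algPMM p x y z]

theorem alg_le_two_lp_pmm_general (fp : ℝ → ℝ)
    (hfp : ∀ t ∈ Set.Icc (0 : ℝ) 1, 0 ≤ fp t ∧ fp t ≤ 2 * t)
    (x y z : ℝ) (hx : x ∈ Set.Icc (0 : ℝ) 1) (hy : y ∈ Set.Icc (0 : ℝ) 1)
    (hz : z ∈ Set.Icc (0 : ℝ) 1) :
    2 - 2*y*z - 2*(fp x) + (fp x)*y + (fp x)*z ≤
      2 * (2 + x - y - z - x*y*z - (fp x)*y - (fp x)*z + 2*(fp x)*y*z) := by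
  obtain ⟨hp₀, hp⟩ := hfp x hx
  exact algPMM_le_two_mul_lpPMM hp₀ hp hy hz

/-- For signature `σ = (+,-,-)` with `f⁻(t) = t` and any rounding function `f⁺` satisfying
`0 ≤ f⁺(t) ≤ 2t` on `[0,1]`, the inequality `2·LP^σ(x,y,z) ≥ ALG^σ(x,y,z)` holds for all
edge lengths `x, y, z ∈ [0,1]` satisfying the triangle inequality, where
`ALG^σ(x,y,z) = 2 - 2yz - 2f⁺(x) + f⁺(x)y + f⁺(x)z` and
`LP^σ(x,y,z) = 2 + x - y - z - xyz - f⁺(x)y - f⁺(x)z + 2f⁺(x)yz`. -/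
theorem alg_le_two_lp_pmm (fp : ℝ → ℝ)
    (hfp : ∀ t ∈ Set.Icc (0 : ℝ) 1, 0 ≤ fp t ∧ fp t ≤ 2 * t)
    (x y z : ℝ) (hx : x ∈ Set.Icc (0 : ℝ) 1) (hy : y ∈ Set.Icc (0 : ℝ) 1)
    (hz : z ∈ Set.Icc (0 : ℝ) 1)
    (t1 : x ≤ y + z) (t2 : y ≤ x + z) (t3 : z ≤ x + y) :
    2 - 2*y*z - 2*(fp x) + (fp x)*y + (fp x)*z ≤
      2 * (2 + x - y - z - x*y*z - (fp x)*y - (fp x)*z + 2*(fp x)*y*z) :=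
  alg_le_two_lp_pmm_general fp hfp x y z hx hy hz
end
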